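/- arXiv:2111.10209 — 14 statements merged into one kernel-verified Lean document; each statement's English description precedes it below -/
import Mathlib

section
/- In a normed division algebra D, for all A, B, C in D one has ⟨AC, BC⟩ = ⟨A, B⟩‖C‖², i.e., right multiplication by C scales the inner product by ‖C‖². -/
open scoped RealInnerProductSpace

/-- The real part of `A`: the orthogonal projection of `A` onto the span of the unit `e`. -/
noncomputable def ndaRe {n : ℕ} (e A : EuclideanSpace ℝ (Fin n)) : EuclideanSpace ℝ (Fin n) :=
  (⟪e, A⟫ / ⟪e, e⟫) • e

/-- The imaginary part of `A`: the component of `A` orthogonal to the unit `e`. -/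
noncomputable def ndaIm {n : ℕ} (e A : EuclideanSpace ℝ (Fin n)) : EuclideanSpace ℝ (Fin n) :=
  A - ndaRe e A

/-- The conjugation `A ↦ Re(A) - Im(A)` in a normed division algebra with unit `e`. -/
noncomputable def ndaConj {n : ℕ} (e A : EuclideanSpace ℝ (Fin n)) : EuclideanSpace ℝ (Fin n) :=
  ndaRe e A - ndaIm e A

/-- In a normed division algebra, `⟪A*C, B*C⟫ = ⟪A, B⟫ * ‖C‖ ^ 2`: right multiplication
by `C` scales the inner product by `‖C‖ ^ 2`. -/
theorem nda_inner_mul_right {n : ℕ}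
    (mul : EuclideanSpace ℝ (Fin n) → EuclideanSpace ℝ (Fin n) → EuclideanSpace ℝ (Fin n))
    (e : EuclideanSpace ℝ (Fin n))
    (h_add_left : ∀ a b c, mul (a + b) c = mul a c + mul b c)
    (h_add_right : ∀ a b c, mul a (b + c) = mul a b + mul a c)
    (h_smul_left : ∀ (r : ℝ) a b, mul (r • a) b = r • mul a b)
    (h_smul_right : ∀ (r : ℝ) a b, mul a (r • b) = r • mul a b)
    (h_one_left : ∀ a, mul e a = a)
    (h_one_right : ∀ a, mul a e = a)
    (h_norm : ∀ a b, ‖mul a b‖ = ‖a‖ * ‖b‖)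
    : ∀ A B C : EuclideanSpace ℝ (Fin n),
      ⟪mul A C, mul B C⟫ = ⟪A, B⟫ * ‖C‖ ^ 2 := by
  intro A B C
  have key : ∀ X, ‖mul X C‖ ^ 2 = ‖X‖ ^ 2 * ‖C‖ ^ 2 := fun X => by rw [h_norm]; ring
  have h1 := key (A + B)
  rw [h_add_left] at h1
  rw [norm_add_sq_real, norm_add_sq_real] at h1
  have hA := key A
  have hB := key B
  nlinarith [hA, hB, h1]
end

section
/- In a normed division algebra D with conjugation defined by Ā = Re(A) − Im(A), for all A, B, C in D one has ⟨A, BC⟩ = ⟨A·C̄, B⟩. -/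
open scoped RealInnerProductSpace

/-- In a normed division algebra, `⟪A, B*C⟫ = ⟪A * conj C, B⟫`. -/
theorem nda_inner_mul_conj {n : ℕ}
    (mul : EuclideanSpace ℝ (Fin n) → EuclideanSpace ℝ (Fin n) → EuclideanSpace ℝ (Fin n))
    (e : EuclideanSpace ℝ (Fin n))
    (h_add_left : ∀ a b c, mul (a + b) c = mul a c + mul b c)
    (h_add_right : ∀ a b c, mul a (b + c) = mul a b + mul a c)
    (h_smul_left : ∀ (r : ℝ) a b, mul (r • a) b = r • mul a b)
    (h_smul_right : ∀ (r : ℝ) a b, mul a (r • b) = r • mul a b)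
    (h_one_left : ∀ a, mul e a = a)
    (h_one_right : ∀ a, mul a e = a)
    (h_norm : ∀ a b, ‖mul a b‖ = ‖a‖ * ‖b‖)
    : ∀ A B C : EuclideanSpace ℝ (Fin n),
      ⟪A, mul B C⟫ = ⟪mul A (ndaConj e C), B⟫ := by
  intro A B C
  by_cases he : e = 0
  · -- degenerate case: everything is zero
    have hz : ∀ a : EuclideanSpace ℝ (Fin n), a = 0 := by
      intro a
      have h1 := h_one_left a
      have h2 : mul e a = 0 := by
        rw [he, show (0 : EuclideanSpace ℝ (Fin n)) = (0:ℝ) • (0 : EuclideanSpace ℝ (Fin n)) by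
          simp, h_smul_left]
        simp
      rw [h1] at h2
      exact h2
    rw [hz A, hz B]
    simp
  · have hne : ‖e‖ = 1 := by
      have h1 := h_norm e e
      rw [h_one_left] at h1
      have h2 : ‖e‖ ≠ 0 := norm_ne_zero_iff.mpr he
      have h3 : ‖e‖ * 1 = ‖e‖ * ‖e‖ := by rw [mul_one]; exact h1
      exact (mul_left_cancel₀ h2 h3).symm
    -- Step 1: ⟪a*b, a*c⟫ = ‖a‖² ⟪b,c⟫
    have key1 : ∀ a b c : EuclideanSpace ℝ (Fin n),
        ⟪mul a b, mul a c⟫ = ‖a‖^2 * ⟪b, c⟫ := by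
      intro a b c
      have h2 : ‖mul a b + mul a c‖^2 = (‖a‖ * ‖b + c‖)^2 := by
        rw [← h_add_right, h_norm]
      rw [norm_add_sq_real, mul_pow, norm_add_sq_real, h_norm, h_norm] at h2
      linear_combination h2 / 2
    -- Step 2: polarization in the first argument
    have key2 : ∀ a a' b c : EuclideanSpace ℝ (Fin n),
        ⟪mul a b, mul a' c⟫ + ⟪mul a' b, mul a c⟫ = 2 * ⟪a, a'⟫ * ⟪b, c⟫ := by
      intro a a' b c
      have h1 := key1 (a + a') b c
      rw [h_add_left, h_add_left, inner_add_left, inner_add_right, inner_add_right,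
        norm_add_sq_real] at h1
      rw [key1 a b c, key1 a' b c] at h1
      linear_combination h1
    -- Main exchange identity
    have key3 := key2 A B e C
    rw [h_one_right, h_one_right] at key3
    -- conj C = (2 ⟪e,C⟫) • e - C
    have hconj : ndaConj e C = (2 * ⟪e, C⟫) • e - C := by
      unfold ndaConj ndaIm ndaRe
      have : ⟪e, e⟫ = (1:ℝ) := by
        rw [real_inner_self_eq_norm_sq, hne]; norm_num
      rw [this]
      module
    have hsub : ∀ a b c : EuclideanSpace ℝ (Fin n), mul a (b - c) = mul a b - mul a c := by
      intro a b c
      have := h_add_right a (b - c) c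
      rw [sub_add_cancel] at this
      rw [this]
      abel
    rw [hconj, hsub, h_smul_right, h_one_right, inner_sub_left, real_inner_smul_left]
    have hsym : ⟪B, mul A C⟫ = ⟪mul A C, B⟫ := real_inner_comm _ _
    linear_combination key3 - hsym
end

section
/- In a normed division algebra, conjugation is an anti-automorphism of the product: for all A, B, conj(AB) = conj(B) · conj(A). -/
open scoped RealInnerProductSpace

/-- In a normed division algebra, conjugation is an anti-automorphism of the product:
`conj (A*B) = conj B * conj A`. -/
theorem nda_conj_mul {n : ℕ}
    (mul : EuclideanSpace ℝ (Fin n) → EuclideanSpace ℝ (Fin n) → EuclideanSpace ℝ (Fin n))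
    (e : EuclideanSpace ℝ (Fin n))
    (h_add_left : ∀ a b c, mul (a + b) c = mul a c + mul b c)
    (h_add_right : ∀ a b c, mul a (b + c) = mul a b + mul a c)
    (h_smul_left : ∀ (r : ℝ) a b, mul (r • a) b = r • mul a b)
    (h_smul_right : ∀ (r : ℝ) a b, mul a (r • b) = r • mul a b)
    (h_one_left : ∀ a, mul e a = a)
    (h_one_right : ∀ a, mul a e = a)
    (h_norm : ∀ a b, ‖mul a b‖ = ‖a‖ * ‖b‖)
    : ∀ A B : EuclideanSpace ℝ (Fin n),
      ndaConj e (mul A B) = mul (ndaConj e B) (ndaConj e A) := by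
  intro A B
  -- either the unit has norm 1, or the whole space is trivial
  have hee : ‖e‖ = ‖e‖ * ‖e‖ := by
    conv_lhs => rw [← h_one_left e, h_norm]
  rcases eq_or_ne ‖e‖ 0 with hz | hnz
  · -- degenerate case: e = 0, hence every element is 0
    have he0 : e = 0 := norm_eq_zero.mp hz
    have htriv : ∀ a : EuclideanSpace ℝ (Fin n), a = 0 := by
      intro a
      have := h_one_left a
      rw [he0] at this
      have h0 : ((0 : EuclideanSpace ℝ (Fin n))) = (0:ℝ) • (0 : EuclideanSpace ℝ (Fin n)) := by
        simp
      rw [h0, h_smul_left, zero_smul] at this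
      exact this.symm
    rw [htriv (ndaConj e (mul A B)), htriv (mul (ndaConj e B) (ndaConj e A))]
  · have hn1 : ‖e‖ = 1 := by
      have h : ‖e‖ * 1 = ‖e‖ * ‖e‖ := by rw [mul_one]; exact hee
      exact mul_left_cancel₀ hnz h.symm
    have he : ⟪e, e⟫ = 1 := by
      rw [real_inner_self_eq_norm_mul_norm, hn1]; norm_num
    -- conjugation in convenient form
    set cj : EuclideanSpace ℝ (Fin n) → EuclideanSpace ℝ (Fin n) :=
      fun a => (2 * ⟪e, a⟫) • e - a with hcj
    have hconj : ∀ a, ndaConj e a = cj a := by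
      intro a
      simp only [ndaConj, ndaIm, ndaRe, he, div_one, hcj]
      module
    -- subtraction distributes over mul
    have h_sub_left : ∀ a b c, mul (a - b) c = mul a c - mul b c := by
      intro a b c
      have h : a - b = a + (-1 : ℝ) • b := by module
      rw [h, h_add_left, h_smul_left]; module
    have h_sub_right : ∀ a b c, mul a (b - c) = mul a b - mul a c := by
      intro a b c
      have h : b - c = b + (-1 : ℝ) • c := by module
      rw [h, h_add_right, h_smul_right]; module
    -- squared norm identity
    have hsq : ∀ x y, ⟪mul x y, mul x y⟫ = ⟪x, x⟫ * ⟪y, y⟫ := by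
      intro x y
      rw [real_inner_self_eq_norm_mul_norm, real_inner_self_eq_norm_mul_norm,
        real_inner_self_eq_norm_mul_norm, h_norm]
      ring
    -- polarization in the second argument
    have k1 : ∀ a b c, ⟪mul a b, mul a c⟫ = ⟪a, a⟫ * ⟪b, c⟫ := by
      intro a b c
      have h1 := hsq a (b + c)
      rw [h_add_right] at h1
      simp only [inner_add_left, inner_add_right] at h1
      have h2 := hsq a b
      have h3 := hsq a c
      have hc := real_inner_comm (mul a b) (mul a c)
      have hc' := real_inner_comm b c
      linear_combination (h1 - h2 - h3) / 2 - hc / 2 + ⟪a,a⟫ * hc' / 2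
    -- exchange identity
    have exch : ∀ a b c d,
        ⟪mul a b, mul c d⟫ + ⟪mul c b, mul a d⟫ = 2 * ⟪a, c⟫ * ⟪b, d⟫ := by
      intro a b c d
      have h1 := k1 (a + c) b d
      rw [h_add_left, h_add_left] at h1
      simp only [inner_add_left, inner_add_right] at h1
      have h2 := k1 a b d
      have h3 := k1 c b d
      have hc := real_inner_comm c a
      have hc2 := real_inner_comm (mul c b) (mul a d)
      have hc3 := real_inner_comm (mul a b) (mul c d)
      linear_combination h1 - h2 - h3 - hc * ⟪b,d⟫
    -- left braiding: ⟪a*b, d⟫ = ⟪(cj a)*d, b⟫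
    have hL : ∀ a b d, ⟪mul a b, d⟫ = ⟪mul (cj a) d, b⟫ := by
      intro a b d
      have h1 := exch a b e d
      rw [h_one_left, h_one_left] at h1
      have h2 : mul (cj a) d = (2 * ⟪e, a⟫) • mul e d - mul a d := by
        rw [hcj]; dsimp only
        rw [h_sub_left, h_smul_left]
      rw [h2, h_one_left]
      simp only [inner_sub_left, real_inner_smul_left]
      have hc := real_inner_comm a e
      have hc2 := real_inner_comm b (mul a d)
      have hc3 := real_inner_comm b d
      linear_combination h1 + hc2 - 2 * ⟪b,d⟫ * hc - 2 * ⟪e,a⟫ * hc3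
    -- right braiding: ⟪a*b, c⟫ = ⟪a, c * (cj b)⟫
    have hR : ∀ a b c, ⟪mul a b, c⟫ = ⟪a, mul c (cj b)⟫ := by
      intro a b c
      have h1 := exch a b c e
      rw [h_one_right, h_one_right] at h1
      have h2 : mul c (cj b) = (2 * ⟪e, b⟫) • mul c e - mul c b := by
        rw [hcj]; dsimp only
        rw [h_sub_right, h_smul_right]
      rw [h2, h_one_right]
      simp only [inner_sub_right, real_inner_smul_right]
      have hc := real_inner_comm b e
      have hc2 := real_inner_comm a (mul c b)
      linear_combination h1 - hc2 - 2 * ⟪a,c⟫ * hc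
    -- conjugation is involutive
    have hinv : ∀ a, cj (cj a) = a := by
      intro a
      rw [hcj]; dsimp only
      rw [inner_sub_right, inner_smul_right, he]
      module
    -- conjugation is self-adjoint
    have hsa : ∀ x y, ⟪cj x, y⟫ = ⟪x, cj y⟫ := by
      intro x y
      rw [hcj]; dsimp only
      simp only [inner_sub_left, inner_sub_right, real_inner_smul_left, real_inner_smul_right]
      linear_combination (2 * ⟪e,y⟫) * real_inner_comm x e
    rw [hconj, hconj, hconj]
    apply ext_inner_right ℝ
    intro c
    calc ⟪cj (mul A B), c⟫ = ⟪mul A B, cj c⟫ := hsa _ _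
      _ = ⟪mul (cj A) (cj c), B⟫ := hL _ _ _
      _ = ⟪mul (cj B) (cj A), c⟫ := by
          rw [hL (cj B) (cj A) c, hinv]
          rw [hR B c (cj A)]
          exact real_inner_comm _ _
end

section
/- In a normed division algebra, for all A, B, C: conj(A)(BC) + conj(B)(AC) = 2⟨A,B⟩C. -/
open scoped RealInnerProductSpace

/-!
Polarizing `‖ab‖² = ‖a‖²‖b‖²` in each factor gives
`⟪ac, bd⟫ + ⟪bc, ad⟫ = 2⟪a,b⟫⟪c,d⟫`. Taking `b = 1` shows that left multiplication by `ā` is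
the adjoint of left multiplication by `a`, so `⟪ā(BC) + B̄(AC), X⟫ = ⟪BC, AX⟫ + ⟪AC, BX⟫`,
which is `2⟪A,B⟫⟪C,X⟫` by the same identity.
-/

section IsometricBilinear

variable {E : Type*} [NormedAddCommGroup E] [InnerProductSpace ℝ E]
  (m : E →ₗ[ℝ] E →ₗ[ℝ] E) (hm : ∀ a b, ‖m a b‖ = ‖a‖ * ‖b‖)
include hm

theorem inner_apply_apply_same_left (a b c : E) : ⟪m a b, m a c⟫ = ‖a‖ ^ 2 * ⟪b, c⟫ := by
  have hbc := norm_add_sq_real (m a b) (m a c)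
  rw [← map_add, hm, hm, hm, mul_pow, mul_pow, mul_pow, norm_add_sq_real] at hbc
  linear_combination -hbc / 2

theorem inner_apply_apply_add_inner_apply_apply (a b c d : E) :
    ⟪m a c, m b d⟫ + ⟪m b c, m a d⟫ = 2 * ⟪a, b⟫ * ⟪c, d⟫ := by
  have hab := inner_apply_apply_same_left m hm (a + b) c d
  simp only [map_add, LinearMap.add_apply, inner_add_left, inner_add_right] at hab
  rw [norm_add_sq_real, inner_apply_apply_same_left m hm a,
    inner_apply_apply_same_left m hm b] at hab
  linear_combination hab

variable {e : E} (he : ∀ x, m e x = x)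
include he

theorem norm_eq_one_of_apply_eq_self [Nontrivial E] : ‖e‖ = 1 := by
  obtain ⟨x, hx⟩ := exists_ne (0 : E)
  have hnorm := hm e x
  rw [he] at hnorm
  exact (mul_eq_right₀ (norm_ne_zero_iff.mpr hx)).mp hnorm.symm

theorem inner_apply_reflect_apply (a x y : E) : ⟪m ((2 * ⟪e, a⟫) • e - a) y, x⟫ = ⟪y, m a x⟫ := by
  have h := inner_apply_apply_add_inner_apply_apply m hm a e y x
  rw [he, he, real_inner_comm e a] at h
  rw [map_sub, map_smul, LinearMap.sub_apply, LinearMap.smul_apply, he, inner_sub_left,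
    real_inner_smul_left]
  linear_combination -h

end IsometricBilinear

theorem ndaConj_eq_of_norm_eq_one {n : ℕ} {e : EuclideanSpace ℝ (Fin n)} (he : ‖e‖ = 1)
    (a : EuclideanSpace ℝ (Fin n)) : ndaConj e a = (2 * ⟪e, a⟫) • e - a := by
  rw [ndaConj, ndaIm, ndaRe, real_inner_self_eq_norm_sq, he]
  module

theorem nda_conj_mul_add_general {n : ℕ}
    (mul : EuclideanSpace ℝ (Fin n) → EuclideanSpace ℝ (Fin n) → EuclideanSpace ℝ (Fin n))
    (e : EuclideanSpace ℝ (Fin n))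
    (h_add_left : ∀ a b c, mul (a + b) c = mul a c + mul b c)
    (h_add_right : ∀ a b c, mul a (b + c) = mul a b + mul a c)
    (h_smul_left : ∀ (r : ℝ) a b, mul (r • a) b = r • mul a b)
    (h_smul_right : ∀ (r : ℝ) a b, mul a (r • b) = r • mul a b)
    (h_one_left : ∀ a, mul e a = a)
    (h_norm : ∀ a b, ‖mul a b‖ = ‖a‖ * ‖b‖)
    : ∀ A B C : EuclideanSpace ℝ (Fin n),
      mul (ndaConj e A) (mul B C) + mul (ndaConj e B) (mul A C) = (2 * ⟪A, B⟫) • C := by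
  intro A B C
  rcases subsingleton_or_nontrivial (EuclideanSpace ℝ (Fin n)) with _ | _
  · exact Subsingleton.elim _ _
  let m := LinearMap.mk₂ ℝ mul h_add_left h_smul_left h_add_right h_smul_right
  have hm : ∀ a b, ‖m a b‖ = ‖a‖ * ‖b‖ := h_norm
  have he : ∀ a, m e a = a := h_one_left
  have hconj := ndaConj_eq_of_norm_eq_one (norm_eq_one_of_apply_eq_self m hm he)
  rw [hconj, hconj]
  change m _ (m B C) + m _ (m A C) = _
  refine ext_inner_right ℝ fun X => ?_
  rw [inner_add_left, inner_apply_reflect_apply m hm he, inner_apply_reflect_apply m hm he,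
    inner_apply_apply_add_inner_apply_apply m hm, real_inner_comm B, real_inner_smul_left]

/-- In a normed division algebra, `conj A * (B*C) + conj B * (A*C) = 2⟪A,B⟫ • C`. -/
theorem nda_conj_mul_add {n : ℕ}
    (mul : EuclideanSpace ℝ (Fin n) → EuclideanSpace ℝ (Fin n) → EuclideanSpace ℝ (Fin n))
    (e : EuclideanSpace ℝ (Fin n))
    (h_add_left : ∀ a b c, mul (a + b) c = mul a c + mul b c)
    (h_add_right : ∀ a b c, mul a (b + c) = mul a b + mul a c)
    (h_smul_left : ∀ (r : ℝ) a b, mul (r • a) b = r • mul a b)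
    (h_smul_right : ∀ (r : ℝ) a b, mul a (r • b) = r • mul a b)
    (h_one_left : ∀ a, mul e a = a)
    (h_one_right : ∀ a, mul a e = a)
    (h_norm : ∀ a b, ‖mul a b‖ = ‖a‖ * ‖b‖)
    : ∀ A B C : EuclideanSpace ℝ (Fin n),
      mul (ndaConj e A) (mul B C) + mul (ndaConj e B) (mul A C) = (2 * ⟪A, B⟫) • C :=
  nda_conj_mul_add_general mul e h_add_left h_add_right h_smul_left h_smul_right h_one_left h_norm
end

section
/- In a normed division algebra, for all purely imaginary elements A, B, C: A(BC) + B(AC) = −2⟨A,B⟩C, and AB + BA = −2⟨A,B⟩·1. -/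
open scoped RealInnerProductSpace

/-- In a normed division algebra, for purely imaginary A, B, C:
`A(BC) + B(AC) = -2⟪A,B⟫ • C` and `AB + BA = -2⟪A,B⟫ • 1`. -/
theorem nda_imaginary_identities {n : ℕ}
    (mul : EuclideanSpace ℝ (Fin n) → EuclideanSpace ℝ (Fin n) → EuclideanSpace ℝ (Fin n))
    (e : EuclideanSpace ℝ (Fin n))
    (h_add_left : ∀ a b c, mul (a + b) c = mul a c + mul b c)
    (h_add_right : ∀ a b c, mul a (b + c) = mul a b + mul a c)
    (h_smul_left : ∀ (r : ℝ) a b, mul (r • a) b = r • mul a b)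
    (h_smul_right : ∀ (r : ℝ) a b, mul a (r • b) = r • mul a b)
    (h_one_left : ∀ a, mul e a = a)
    (h_one_right : ∀ a, mul a e = a)
    (h_norm : ∀ a b, ‖mul a b‖ = ‖a‖ * ‖b‖)
    : ∀ A B C : EuclideanSpace ℝ (Fin n),
      ndaRe e A = 0 → ndaRe e B = 0 → ndaRe e C = 0 →
      mul A (mul B C) + mul B (mul A C) = (-(2 * ⟪A, B⟫)) • C ∧
      mul A B + mul B A = (-(2 * ⟪A, B⟫)) • e := by

  -- Step 1: polarization in the left argument.
  have L1 : ∀ a c b, ⟪mul a b, mul c b⟫ = ⟪a, c⟫ * ‖b‖ ^ 2 := by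
    intro a c b
    have h1 : ‖mul a b + mul c b‖ ^ 2 = ‖a + c‖ ^ 2 * ‖b‖ ^ 2 := by
      rw [← h_add_left, h_norm]; ring
    have h2 : ‖mul a b‖ ^ 2 = ‖a‖ ^ 2 * ‖b‖ ^ 2 := by rw [h_norm]; ring
    have h3 : ‖mul c b‖ ^ 2 = ‖c‖ ^ 2 * ‖b‖ ^ 2 := by rw [h_norm]; ring
    rw [norm_add_sq_real, norm_add_sq_real] at h1
    linear_combination (h1 - h2 - h3) / 2
  -- Step 2: full exchange identity.
  have E : ∀ a c b d, ⟪mul a b, mul c d⟫ + ⟪mul a d, mul c b⟫ = 2 * ⟪a, c⟫ * ⟪b, d⟫ := by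
    intro a c b d
    have h1 := L1 a c (b + d)
    rw [h_add_right, h_add_right, norm_add_sq_real] at h1
    simp only [inner_add_left, inner_add_right] at h1
    have h2 := L1 a c b
    have h3 := L1 a c d
    linear_combination h1 - h2 - h3
  intro A B C hA hB hC
  by_cases he : e = 0
  · -- degenerate case: the whole space is trivial.
    have hz : ∀ x : EuclideanSpace ℝ (Fin n), x = 0 := by
      intro x
      have h1 := h_one_left x
      rw [he] at h1
      have h0 : mul (0 : EuclideanSpace ℝ (Fin n)) x = 0 := by
        have := h_smul_left 0 0 x
        simpa using this
      rw [h0] at h1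
      exact h1.symm
    exact ⟨(hz _).trans (hz _).symm, (hz _).trans (hz _).symm⟩
  · have hee : ⟪e, e⟫ ≠ 0 := by
      simpa using (inner_self_ne_zero (𝕜 := ℝ)).mpr he
    have key : ∀ X : EuclideanSpace ℝ (Fin n), ndaRe e X = 0 → ⟪e, X⟫ = 0 := by
      intro X hX
      unfold ndaRe at hX
      rcases smul_eq_zero.mp hX with h | h
      · rcases div_eq_zero_iff.mp h with h | h
        · exact h
        · exact absurd h hee
      · exact absurd h he
    have imA := key A hA
    have imB := key B hB
    -- skew-adjointness of left multiplication by an imaginary element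
    have I : ∀ X : EuclideanSpace ℝ (Fin n), ⟪e, X⟫ = 0 →
        ∀ y d, ⟪mul X y, d⟫ = -⟪mul X d, y⟫ := by
      intro X hX y d
      have h1 := E X e y d
      rw [h_one_left, h_one_left] at h1
      have h2 : ⟪X, e⟫ = 0 := by rw [real_inner_comm]; exact hX
      rw [h2] at h1
      linarith
    constructor
    · apply ext_inner_right ℝ
      intro x
      rw [inner_add_left]
      rw [I A imA (mul B C) x, I B imB (mul A C) x]
      have h1 := E A B x C
      have h2 : ⟪mul B x, mul A C⟫ = ⟪mul A C, mul B x⟫ := real_inner_comm _ _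
      have h3 : ⟪(-(2 * ⟪A, B⟫)) • C, x⟫ = (-(2 * ⟪A, B⟫)) * ⟪C, x⟫ :=
        real_inner_smul_left _ _ _
      have h4 : ⟪C, x⟫ = ⟪x, C⟫ := real_inner_comm _ _
      rw [h3, h4]
      linarith
    · apply ext_inner_right ℝ
      intro x
      rw [inner_add_left]
      rw [I A imA B x, I B imB A x]
      have h1 := E A B x e
      simp only [h_one_right] at h1
      have h2 : ⟪A, mul B x⟫ = ⟪mul B x, A⟫ := real_inner_comm _ _
      have h3 : ⟪(-(2 * ⟪A, B⟫)) • e, x⟫ = (-(2 * ⟪A, B⟫)) * ⟪e, x⟫ :=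
        real_inner_smul_left _ _ _
      have h4 : ⟪e, x⟫ = ⟪x, e⟫ := real_inner_comm _ _
      rw [h3, h4]
      linarith
end

section
/- In a normed division algebra, for every element A one has A·Ā = Ā·A = ‖A‖²·1. -/
open scoped RealInnerProductSpace

/-- In a normed division algebra, `A * conj A = conj A * A = ‖A‖ ^ 2 • 1`. -/
theorem nda_mul_conj_self {n : ℕ}
    (mul : EuclideanSpace ℝ (Fin n) → EuclideanSpace ℝ (Fin n) → EuclideanSpace ℝ (Fin n))
    (e : EuclideanSpace ℝ (Fin n))
    (h_add_left : ∀ a b c, mul (a + b) c = mul a c + mul b c)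
    (h_add_right : ∀ a b c, mul a (b + c) = mul a b + mul a c)
    (h_smul_left : ∀ (r : ℝ) a b, mul (r • a) b = r • mul a b)
    (h_smul_right : ∀ (r : ℝ) a b, mul a (r • b) = r • mul a b)
    (h_one_left : ∀ a, mul e a = a)
    (h_one_right : ∀ a, mul a e = a)
    (h_norm : ∀ a b, ‖mul a b‖ = ‖a‖ * ‖b‖)
    : ∀ A : EuclideanSpace ℝ (Fin n),
      mul A (ndaConj e A) = (‖A‖ ^ 2) • e ∧ mul (ndaConj e A) A = (‖A‖ ^ 2) • e := by
  intro A
  -- degenerate case: e = 0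
  by_cases he0 : e = 0
  · have hzero : ∀ a : EuclideanSpace ℝ (Fin n), a = 0 := by
      intro a
      have := h_one_left a
      rw [he0] at this
      have h0 : mul 0 a = 0 := by
        have := h_smul_left 0 0 a
        simpa using this
      rw [h0] at this
      exact this.symm
    rw [hzero A, hzero (ndaConj e 0), hzero (mul 0 0), hzero ((‖(0 : EuclideanSpace ℝ (Fin n))‖ ^ 2) • e)]
    exact ⟨rfl, rfl⟩
  -- main case
  have hne : ‖e‖ = 1 := by
    have h1 := h_norm e e
    rw [h_one_left] at h1
    have hpos : ‖e‖ ≠ 0 := by simpa using he0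
    have h2 : ‖e‖ * 1 = ‖e‖ * ‖e‖ := by rw [mul_one]; exact h1
    exact (mul_left_cancel₀ hpos h2).symm
  have hee : ⟪e, e⟫ = 1 := by
    rw [real_inner_self_eq_norm_sq, hne]; norm_num
  -- polarization left
  have pl : ∀ a b c, ⟪mul a b, mul a c⟫ = ‖a‖ ^ 2 * ⟪b, c⟫ := by
    intro a b c
    have h1 := h_norm a (b + c)
    have h2 : ‖mul a b + mul a c‖ ^ 2 = (‖a‖ * ‖b + c‖) ^ 2 := by
      rw [← h_add_right, h1]
    rw [@norm_add_sq_real] at h2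
    have h3 : ‖b + c‖ ^ 2 = ‖b‖ ^ 2 + 2 * ⟪b, c⟫ + ‖c‖ ^ 2 := @norm_add_sq_real _ _ _ b c
    have hb : ‖mul a b‖ ^ 2 = ‖a‖ ^ 2 * ‖b‖ ^ 2 := by rw [h_norm]; ring
    have hc : ‖mul a c‖ ^ 2 = ‖a‖ ^ 2 * ‖c‖ ^ 2 := by rw [h_norm]; ring
    linear_combination h2 / 2 + ‖a‖ ^ 2 / 2 * h3 - hb / 2 - hc / 2
  -- polarization right
  have pr : ∀ a b c, ⟪mul a c, mul b c⟫ = ⟪a, b⟫ * ‖c‖ ^ 2 := by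
    intro a b c
    have h1 := h_norm (a + b) c
    have h2 : ‖mul a c + mul b c‖ ^ 2 = (‖a + b‖ * ‖c‖) ^ 2 := by
      rw [← h_add_left, h1]
    rw [@norm_add_sq_real] at h2
    have h3 : ‖a + b‖ ^ 2 = ‖a‖ ^ 2 + 2 * ⟪a, b⟫ + ‖b‖ ^ 2 := @norm_add_sq_real _ _ _ a b
    have ha : ‖mul a c‖ ^ 2 = ‖a‖ ^ 2 * ‖c‖ ^ 2 := by rw [h_norm]; ring
    have hb : ‖mul b c‖ ^ 2 = ‖b‖ ^ 2 * ‖c‖ ^ 2 := by rw [h_norm]; ring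
    linear_combination h2 / 2 + ‖c‖ ^ 2 / 2 * h3 - ha / 2 - hb / 2
  -- exchange identity
  have ex : ∀ a b c d, ⟪mul a b, mul c d⟫ + ⟪mul c b, mul a d⟫ = 2 * ⟪a, c⟫ * ⟪b, d⟫ := by
    intro a b c d
    have h1 := pl (a + c) b d
    rw [h_add_left, h_add_left, inner_add_left, inner_add_right, inner_add_right] at h1
    have h3 : ‖a + c‖ ^ 2 = ‖a‖ ^ 2 + 2 * ⟪a, c⟫ + ‖c‖ ^ 2 := @norm_add_sq_real _ _ _ a c
    have h4 := pl a b d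
    have h5 := pl c b d
    rw [h3] at h1
    linarith
  -- key: imaginary square
  have key : ∀ v : EuclideanSpace ℝ (Fin n), ⟪e, v⟫ = 0 →
      mul v v = (-(‖v‖ ^ 2)) • e := by
    intro v hv
    apply ext_inner_right ℝ
    intro w
    have h1 := ex v v w e
    rw [h_one_right, h_one_right] at h1
    have h2 := pr w e v
    rw [h_one_left] at h2
    have hve : ⟪v, e⟫ = 0 := by rw [real_inner_comm]; exact hv
    rw [hve] at h1
    have hwe : ⟪w, e⟫ = ⟪e, w⟫ := real_inner_comm e w
    rw [real_inner_smul_left]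
    have h2' : ⟪mul w v, v⟫ = ⟪w, e⟫ * ‖v‖ ^ 2 := by rw [← h2]
    rw [h2', hwe] at h1
    linarith
  -- decompose A
  set r : ℝ := ⟪e, A⟫ with hr
  have hRe : ndaRe e A = r • e := by
    unfold ndaRe; rw [hee]; simp [hr]
  set v : EuclideanSpace ℝ (Fin n) := ndaIm e A with hvdef
  have hvA : v = A - r • e := by rw [hvdef]; unfold ndaIm; rw [hRe]
  have hA : A = r • e + v := by rw [hvA]; abel
  have hvorth : ⟪e, v⟫ = 0 := by
    rw [hvA, inner_sub_right, real_inner_smul_right, hee, ← hr]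
    ring
  have hconj : ndaConj e A = r • e - v := by
    unfold ndaConj; rw [hRe, ← hvdef]
  have hnormA : ‖A‖ ^ 2 = r ^ 2 + ‖v‖ ^ 2 := by
    rw [hA, @norm_add_sq_real, real_inner_smul_left, hvorth, norm_smul, hne]
    simp [sq_abs]
  have hvv := key v hvorth
  have expand : ∀ x y : EuclideanSpace ℝ (Fin n),
      mul (r • e + x) (r • e + y) =
        (r * r) • e + r • x + r • y + mul x y := by
    intro x y
    simp only [h_add_left, h_add_right, h_smul_left, h_smul_right, h_one_left, h_one_right,
      smul_smul]
    abel
  have hconj' : ndaConj e A = r • e + (-1 : ℝ) • v := by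
    rw [hconj]; module
  constructor
  · rw [hconj', hnormA, hA, expand, h_smul_right, hvv]
    module
  · rw [hconj', hnormA, hA, expand, h_smul_left, hvv]
    module
end

section
/- In a normed division algebra, an element A satisfies A² ∈ Re(D) if and only if A is purely real or purely imaginary. -/
open scoped RealInnerProductSpace

/-- In a normed division algebra, `A ^ 2` is real if and only if A is purely real or
purely imaginary. -/
theorem nda_sq_real_iff {n : ℕ}
    (mul : EuclideanSpace ℝ (Fin n) → EuclideanSpace ℝ (Fin n) → EuclideanSpace ℝ (Fin n))
    (e : EuclideanSpace ℝ (Fin n))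
    (h_add_left : ∀ a b c, mul (a + b) c = mul a c + mul b c)
    (h_add_right : ∀ a b c, mul a (b + c) = mul a b + mul a c)
    (h_smul_left : ∀ (r : ℝ) a b, mul (r • a) b = r • mul a b)
    (h_smul_right : ∀ (r : ℝ) a b, mul a (r • b) = r • mul a b)
    (h_one_left : ∀ a, mul e a = a)
    (h_one_right : ∀ a, mul a e = a)
    (h_norm : ∀ a b, ‖mul a b‖ = ‖a‖ * ‖b‖)
    : ∀ A : EuclideanSpace ℝ (Fin n),
      (∃ r : ℝ, mul A A = r • e) ↔ (ndaIm e A = 0 ∨ ndaRe e A = 0) := by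
  intro A
  by_cases he : e = 0
  · -- degenerate case: the whole space is trivial
    have hz : ∀ a : EuclideanSpace ℝ (Fin n), a = 0 := by
      intro a
      have h1 := h_one_left a
      have h0 : mul e a = 0 := by
        have := h_smul_left 0 e a
        simpa [he] using this
      rw [h0] at h1; exact h1.symm
    constructor
    · intro _; right; simp [ndaRe, he]
    · intro _; exact ⟨0, by simp [hz (mul A A), he]⟩
  · have hnorm2 : ∀ x : EuclideanSpace ℝ (Fin n), ⟪x, x⟫ = ‖x‖ ^ 2 := fun x => by
      rw [real_inner_self_eq_norm_sq]
    have hne : ‖e‖ ≠ 0 := norm_ne_zero_iff.mpr he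
    have he1 : ‖e‖ = 1 := by
      have h1 : ‖e‖ * ‖e‖ = ‖e‖ * 1 := by
        conv_lhs => rw [← h_norm, h_one_left]
        rw [mul_one]
      exact (mul_left_cancel₀ hne h1)
    have hee : ⟪e, e⟫ = 1 := by rw [hnorm2, he1]; norm_num
    -- polarization identities
    have hN : ∀ a b, ⟪mul a b, mul a b⟫ = ⟪a, a⟫ * ⟪b, b⟫ := by
      intro a b; rw [hnorm2, hnorm2, hnorm2, h_norm]; ring
    have hP1 : ∀ a c b, ⟪mul a b, mul c b⟫ = ⟪a, c⟫ * ⟪b, b⟫ := by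
      intro a c b
      have h := hN (a + c) b
      rw [h_add_left, real_inner_add_add_self, real_inner_add_add_self] at h
      nlinarith [hN a b, hN c b]
    have hX : ∀ a b c d,
        ⟪mul a b, mul c d⟫ + ⟪mul a d, mul c b⟫ = 2 * ⟪a, c⟫ * ⟪b, d⟫ := by
      intro a b c d
      have h := hP1 a c (b + d)
      rw [h_add_right, h_add_right, inner_add_left, inner_add_right, inner_add_right,
        real_inner_add_add_self] at h
      nlinarith [hP1 a c b, hP1 a c d]
    have hP2 : ∀ a b c, ⟪mul a b, mul a c⟫ = ⟪a, a⟫ * ⟪b, c⟫ := by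
      intro a b c
      have h := hX a b a c
      linarith [real_inner_comm (mul a c) (mul a b)]
    set r : ℝ := ⟪e, A⟫ with hr
    set v : EuclideanSpace ℝ (Fin n) := ndaIm e A with hv
    have hRe : ndaRe e A = r • e := by rw [ndaRe, hee, div_one]
    have hvA : v = A - r • e := by rw [hv, ndaIm, hRe]
    have hA : A = r • e + v := by rw [hvA]; abel
    have hev : ⟪e, v⟫ = 0 := by
      rw [hvA, inner_sub_right, real_inner_smul_right, hee, hr]; ring
    have hve : ⟪v, e⟫ = 0 := by rw [real_inner_comm]; exact hev
    -- the square of a purely imaginary element is real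
    set c : ℝ := ⟪e, mul v v⟫ with hcdef
    have hc : mul v v = c • e := by
      set w : EuclideanSpace ℝ (Fin n) := mul v v - c • e with hw
      have hew : ⟪e, w⟫ = 0 := by
        rw [hw, inner_sub_right, real_inner_smul_right, hee, hcdef]; ring
      have h1 := hX v v e w
      rw [h_one_left, h_one_left] at h1
      have h2 : ⟪mul v w, v⟫ = 0 := by
        have h3 := hP2 v w e
        rw [h_one_right, real_inner_comm e w, hew] at h3
        simpa using h3
      have h4 : ⟪mul v v, w⟫ = 0 := by
        rw [h2, hve] at h1; linarith
      have h5 : ⟪w, w⟫ = 0 := by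
        conv_lhs => rw [hw]
        rw [inner_sub_left, real_inner_smul_left, h4, hew]; ring
      have h6 : w = 0 := inner_self_eq_zero.mp h5
      rw [hw] at h6
      exact sub_eq_zero.mp h6
    have hAA : mul A A = (r ^ 2 + c) • e + (2 * r) • v := by
      conv_lhs => rw [hA]
      rw [h_add_left, h_add_right, h_add_right, h_smul_left, h_smul_left, h_smul_right,
        h_smul_right, h_one_left, h_one_left, h_one_right, hc]
      module
    constructor
    · rintro ⟨s, hs⟩
      rw [hAA] at hs
      have hkey : (2 * r) • v = (s - r ^ 2 - c) • e := by
        have h9 : (2 * r) • v = s • e - (r ^ 2 + c) • e := by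
          rw [← hs]; abel
        rw [h9]; module
      have h7 := congrArg (fun x : EuclideanSpace ℝ (Fin n) => ⟪v, x⟫) hkey
      simp only [real_inner_smul_right] at h7
      rw [hve, mul_zero] at h7
      rcases mul_eq_zero.mp h7 with h0 | h0
      · right
        have hr0 : r = 0 := by linarith
        rw [hRe, hr0, zero_smul]
      · left
        show v = 0
        exact inner_self_eq_zero.mp h0
    · rintro (h | h)
      · refine ⟨r ^ 2 + c, ?_⟩
        have hv0 : v = 0 := by rw [hv]; exact h
        rw [hAA, hv0, smul_zero, add_zero]
      · have hr0 : r = 0 := by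
          have h1 : r • e = 0 := by rw [← hRe]; exact h
          rcases smul_eq_zero.mp h1 with h2 | h2
          · exact h2
          · exact absurd h2 he
        refine ⟨r ^ 2 + c, ?_⟩
        rw [hAA, hr0]
        module
end

section
/- Every normed division algebra is alternative: the associator [A,B,C] = (AB)C − A(BC) is a totally antisymmetric trilinear function of A, B, C. -/
open scoped RealInnerProductSpace

/-- Every normed division algebra is alternative: the associator
`[A,B,C] = (AB)C - A(BC)` is totally antisymmetric in A, B, C. -/
theorem nda_associator_antisymm {n : ℕ}
    (mul : EuclideanSpace ℝ (Fin n) → EuclideanSpace ℝ (Fin n) → EuclideanSpace ℝ (Fin n))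
    (e : EuclideanSpace ℝ (Fin n))
    (h_add_left : ∀ a b c, mul (a + b) c = mul a c + mul b c)
    (h_add_right : ∀ a b c, mul a (b + c) = mul a b + mul a c)
    (h_smul_left : ∀ (r : ℝ) a b, mul (r • a) b = r • mul a b)
    (h_smul_right : ∀ (r : ℝ) a b, mul a (r • b) = r • mul a b)
    (h_one_left : ∀ a, mul e a = a)
    (h_one_right : ∀ a, mul a e = a)
    (h_norm : ∀ a b, ‖mul a b‖ = ‖a‖ * ‖b‖)
    : ∀ A B C : EuclideanSpace ℝ (Fin n),
      (mul (mul A B) C - mul A (mul B C)) = -(mul (mul B A) C - mul B (mul A C)) ∧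
      (mul (mul A B) C - mul A (mul B C)) = -(mul (mul A C) B - mul A (mul C B)) := by
  have hsq : ∀ a b, ⟪mul a b, mul a b⟫ = ⟪a,a⟫ * ⟪b,b⟫ := by
    intro a b
    rw [real_inner_self_eq_norm_mul_norm, real_inner_self_eq_norm_mul_norm,
      real_inner_self_eq_norm_mul_norm, h_norm]
    ring
  have L1a : ∀ a b c, ⟪mul a b, mul c b⟫ = ⟪a,c⟫ * ⟪b,b⟫ := by
    intro a b c
    have h := hsq (a+c) b
    rw [h_add_left, real_inner_add_add_self, real_inner_add_add_self, hsq, hsq] at h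
    nlinarith [h]
  have L2 : ∀ a b c d, ⟪mul a b, mul c d⟫ + ⟪mul a d, mul c b⟫ = 2*⟪a,c⟫*⟪b,d⟫ := by
    intro a b c d
    have h := L1a a (b+d) c
    rw [h_add_right, h_add_right, real_inner_add_add_self, inner_add_left,
      inner_add_right, inner_add_right, L1a, L1a] at h
    nlinarith [h]
  have L3 : ∀ a b c, ⟪mul a b, c⟫ + ⟪mul a c, b⟫ = 2*⟪a,e⟫*⟪b,c⟫ := by
    intro a b c
    have h := L2 a b e c
    rwa [h_one_left, h_one_left] at h
  have L3' : ∀ a b c, ⟪mul a b, c⟫ + ⟪a, mul c b⟫ = 2*⟪b,e⟫*⟪a,c⟫ := by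
    intro a b c
    have h := L2 a b c e
    rw [h_one_right, h_one_right] at h
    nlinarith [h]
  have MP1 : ∀ a b c, mul a (mul b c) + mul b (mul a c)
      = (2*⟪a,e⟫) • mul b c + (2*⟪b,e⟫) • mul a c - (2*⟪a,b⟫) • c := by
    intro a b c
    apply ext_inner_right ℝ
    intro d
    have h1 := L3 a (mul b c) d
    have h2 := L3 b (mul a c) d
    have h3 := L2 a d b c
    have h4 : ⟪mul b d, mul a c⟫ = ⟪mul a c, mul b d⟫ := real_inner_comm _ _
    have h5 : ⟪d, c⟫ = ⟪c, d⟫ := real_inner_comm _ _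
    rw [h4] at h2
    rw [h5] at h3
    simp only [inner_add_left, inner_sub_left, real_inner_smul_left]
    linarith
  have MP2 : ∀ a b c, mul (mul a b) c + mul (mul a c) b
      = (2*⟪c,e⟫) • mul a b + (2*⟪b,e⟫) • mul a c - (2*⟪b,c⟫) • a := by
    intro a b c
    apply ext_inner_right ℝ
    intro d
    have h1 := L3' (mul a b) c d
    have h2 := L3' (mul a c) b d
    have h3 := L2 a b d c
    simp only [inner_add_left, inner_sub_left, real_inner_smul_left]
    nlinarith [h1, h2, h3]
  have maa : ∀ a b, mul a b + mul b a = (2*⟪a,e⟫) • b + (2*⟪b,e⟫) • a - (2*⟪a,b⟫) • e := by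
    intro a b
    have h := MP1 a b e
    rwa [h_one_right, h_one_right] at h
  have hsub_left : ∀ a b c, mul (a - b) c = mul a c - mul b c := by
    intro a b c
    rw [sub_eq_add_neg, h_add_left, ← neg_one_smul ℝ b, h_smul_left, neg_one_smul,
      ← sub_eq_add_neg]
  have hsub_right : ∀ a b c, mul a (b - c) = mul a b - mul a c := by
    intro a b c
    rw [sub_eq_add_neg, h_add_right, ← neg_one_smul ℝ c, h_smul_right, neg_one_smul,
      ← sub_eq_add_neg]
  intro A B C
  have key1 : mul (mul A B) C + mul (mul B A) C = mul A (mul B C) + mul B (mul A C) := by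
    rw [← h_add_left, maa A B, hsub_left, h_add_left, h_smul_left, h_smul_left,
      h_smul_left, h_one_left, MP1]
  have key2 : mul (mul A B) C + mul (mul A C) B = mul A (mul B C) + mul A (mul C B) := by
    rw [← h_add_right, maa B C, hsub_right, h_add_right, h_smul_right,
      h_smul_right, h_smul_right, h_one_right, MP2]
    abel
  constructor
  · have h' : (mul (mul A B) C - mul A (mul B C)) + (mul (mul B A) C - mul B (mul A C)) = 0 := by
      rw [sub_add_sub_comm, key1, sub_self]
    exact eq_neg_of_add_eq_zero_left h'
  · have h' : (mul (mul A B) C - mul A (mul B C)) + (mul (mul A C) B - mul A (mul C B)) = 0 := by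
      rw [sub_add_sub_comm, key2, sub_self]
    exact eq_neg_of_add_eq_zero_left h'
end

section
/- In a normed division algebra, the commutator and associator of purely imaginary elements are purely imaginary: if A, B, C ∈ Im(D) then [A,B] = AB − BA ∈ Im(D) and [A,B,C] = (AB)C − A(BC) ∈ Im(D). -/
open scoped RealInnerProductSpace

/-- In a normed division algebra, the commutator and associator of purely imaginary
elements are purely imaginary. -/
theorem nda_commutator_associator_imaginary {n : ℕ}
    (mul : EuclideanSpace ℝ (Fin n) → EuclideanSpace ℝ (Fin n) → EuclideanSpace ℝ (Fin n))
    (e : EuclideanSpace ℝ (Fin n))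
    (h_add_left : ∀ a b c, mul (a + b) c = mul a c + mul b c)
    (h_add_right : ∀ a b c, mul a (b + c) = mul a b + mul a c)
    (h_smul_left : ∀ (r : ℝ) a b, mul (r • a) b = r • mul a b)
    (h_smul_right : ∀ (r : ℝ) a b, mul a (r • b) = r • mul a b)
    (h_one_left : ∀ a, mul e a = a)
    (h_one_right : ∀ a, mul a e = a)
    (h_norm : ∀ a b, ‖mul a b‖ = ‖a‖ * ‖b‖)
    : ∀ A B C : EuclideanSpace ℝ (Fin n),
      ndaRe e A = 0 → ndaRe e B = 0 → ndaRe e C = 0 →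
      ndaRe e (mul A B - mul B A) = 0 ∧
      ndaRe e (mul (mul A B) C - mul A (mul B C)) = 0 := by
  intro A B C hA hB hC
  by_cases he : e = 0
  · subst he
    constructor <;> simp [ndaRe]
  -- base identity: ⟪ab, ab⟫ = ⟪a,a⟫⟪b,b⟫
  have base : ∀ a b, ⟪mul a b, mul a b⟫ = ⟪a, a⟫ * ⟪b, b⟫ := by
    intro a b
    rw [real_inner_self_eq_norm_mul_norm, real_inner_self_eq_norm_mul_norm,
      real_inner_self_eq_norm_mul_norm, h_norm]
    ring
  -- polarization in the second argument: ⟪ab, ac⟫ = ⟪a,a⟫⟪b,c⟫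
  have P : ∀ a b c, ⟪mul a b, mul a c⟫ = ⟪a, a⟫ * ⟪b, c⟫ := by
    intro a b c
    have h := base a (b + c)
    rw [h_add_right] at h
    rw [inner_add_add_self, inner_add_add_self] at h
    have h1 := base a b
    have h2 := base a c
    have hs : ⟪mul a c, mul a b⟫ = ⟪mul a b, mul a c⟫ := real_inner_comm _ _
    have hs2 : ⟪c, b⟫ = ⟪b, c⟫ := real_inner_comm _ _
    linear_combination (h - h1 - h2 - hs)/2 + (⟪a,a⟫/2) * hs2
  -- exchange identity: ⟪ab, cd⟫ + ⟪cb, ad⟫ = 2⟪a,c⟫⟪b,d⟫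
  have E : ∀ a b c d, ⟪mul a b, mul c d⟫ + ⟪mul c b, mul a d⟫ = 2 * ⟪a, c⟫ * ⟪b, d⟫ := by
    intro a b c d
    have h := P (a + c) b d
    rw [h_add_left, h_add_left] at h
    simp only [inner_add_add_self, inner_add_left, inner_add_right] at h
    have h1 := P a b d
    have h2 := P c b d
    have hs3 : ⟪c, a⟫ = ⟪a, c⟫ := real_inner_comm _ _
    linear_combination h - h1 - h2 + ⟪b,d⟫ * hs3
  -- from ndaRe = 0 and e ≠ 0, deduce the inner product vanishes
  have hee : (⟪e, e⟫ : ℝ) ≠ 0 := fun h => he (inner_self_eq_zero.mp h)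
  have key : ∀ X : EuclideanSpace ℝ (Fin n), ndaRe e X = 0 → ⟪e, X⟫ = 0 := by
    intro X hX
    unfold ndaRe at hX
    rcases smul_eq_zero.mp hX with h | h
    · rcases div_eq_zero_iff.mp h with h' | h'
      · exact h'
      · exact absurd h' hee
    · exact absurd h he
  have hA' := key A hA
  have hB' := key B hB
  have hC' := key C hC
  -- re formula: ⟪e, XY⟫ = 2⟪e,X⟫⟪e,Y⟫ - ⟪X,Y⟫
  have re_mul : ∀ X Y, ⟪e, mul X Y⟫ = 2 * ⟪X, e⟫ * ⟪Y, e⟫ - ⟪X, Y⟫ := by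
    intro X Y
    have h := E X Y e e
    rw [h_one_left, h_one_left, h_one_right] at h
    have h1 : ⟪mul X Y, e⟫ = ⟪e, mul X Y⟫ := real_inner_comm _ _
    have h2 : ⟪Y, X⟫ = ⟪X, Y⟫ := real_inner_comm _ _
    linarith [h, h1.symm, h2]
  have goal_of_inner : ∀ X : EuclideanSpace ℝ (Fin n), ⟪e, X⟫ = 0 → ndaRe e X = 0 := by
    intro X hX
    unfold ndaRe
    rw [hX]
    simp
  have hAe : ⟪A, e⟫ = 0 := by rw [real_inner_comm]; exact hA'
  have hBe : ⟪B, e⟫ = 0 := by rw [real_inner_comm]; exact hB'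
  have hCe : ⟪C, e⟫ = 0 := by rw [real_inner_comm]; exact hC'
  constructor
  · apply goal_of_inner
    rw [inner_sub_right, re_mul A B, re_mul B A, hAe, hBe, real_inner_comm A B]
    ring
  · apply goal_of_inner
    -- ⟪AB, C⟫ = -⟪B, AC⟫ from E(A,B,e,C); ⟪A, BC⟫ = -⟪B, AC⟫ from E(A,e,B,C)
    have e1 := E A B e C
    rw [h_one_left, h_one_left] at e1
    have e2 := E A e B C
    rw [h_one_right, h_one_right] at e2
    rw [inner_sub_right, re_mul (mul A B) C, re_mul A (mul B C), hCe, hAe]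
    have hABC : ⟪mul A B, C⟫ = ⟪A, mul B C⟫ := by
      linear_combination e1 - e2 + 2 * ⟪B,C⟫ * hAe - 2 * ⟪A,B⟫ * hC'
    rw [hABC]
    ring
end

section
/- In a normed division algebra, the quadrilinear map (A,B,C,D) ↦ ⟨A, [B,C,D]⟩, where [B,C,D] is the associator, is totally antisymmetric, and the trilinear map (A,B,C) ↦ ⟨A, [B,C]⟩ is totally antisymmetric. -/
open scoped RealInnerProductSpace

/-- In a normed division algebra, the quadrilinear map `(A,B,C,D) ↦ ⟪A, [B,C,D]⟫` is
totally antisymmetric, and the trilinear map `(A,B,C) ↦ ⟪A, [B,C]⟫` is totally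
antisymmetric. -/
theorem nda_inner_associator_antisymm {n : ℕ}
    (mul : EuclideanSpace ℝ (Fin n) → EuclideanSpace ℝ (Fin n) → EuclideanSpace ℝ (Fin n))
    (e : EuclideanSpace ℝ (Fin n))
    (h_add_left : ∀ a b c, mul (a + b) c = mul a c + mul b c)
    (h_add_right : ∀ a b c, mul a (b + c) = mul a b + mul a c)
    (h_smul_left : ∀ (r : ℝ) a b, mul (r • a) b = r • mul a b)
    (h_smul_right : ∀ (r : ℝ) a b, mul a (r • b) = r • mul a b)
    (h_one_left : ∀ a, mul e a = a)
    (h_one_right : ∀ a, mul a e = a)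
    (h_norm : ∀ a b, ‖mul a b‖ = ‖a‖ * ‖b‖)
    : (∀ A B C D : EuclideanSpace ℝ (Fin n),
        ⟪A, mul (mul B C) D - mul B (mul C D)⟫
          = -⟪B, mul (mul A C) D - mul A (mul C D)⟫ ∧
        ⟪A, mul (mul B C) D - mul B (mul C D)⟫
          = -⟪A, mul (mul C B) D - mul C (mul B D)⟫ ∧
        ⟪A, mul (mul B C) D - mul B (mul C D)⟫
          = -⟪A, mul (mul B D) C - mul B (mul D C)⟫) ∧
      (∀ A B C : EuclideanSpace ℝ (Fin n),
        ⟪A, mul B C - mul C B⟫ = -⟪B, mul A C - mul C A⟫ ∧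
        ⟪A, mul B C - mul C B⟫ = -⟪A, mul C B - mul B C⟫) := by
  -- Basic polarization identities for a composition algebra.
  have F1 : ∀ x y z : EuclideanSpace ℝ (Fin n),
      ⟪mul x y, mul x z⟫ = ⟪x,x⟫ * ⟪y,z⟫ := by
    intro x y z
    have h1 := norm_add_sq_real (mul x y) (mul x z)
    rw [← h_add_right, h_norm, h_norm, h_norm] at h1
    have h2 := norm_add_sq_real y z
    have h3 : ⟪x,x⟫ = ‖x‖^2 := real_inner_self_eq_norm_sq x
    linear_combination (‖x‖^2 * h2 - h1)/2 - ⟪y,z⟫ * h3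
  have F2 : ∀ x y z : EuclideanSpace ℝ (Fin n),
      ⟪mul x z, mul y z⟫ = ⟪x,y⟫ * ⟪z,z⟫ := by
    intro x y z
    have h1 := norm_add_sq_real (mul x z) (mul y z)
    rw [← h_add_left, h_norm, h_norm, h_norm] at h1
    have h2 := norm_add_sq_real x y
    have h3 : ⟪z,z⟫ = ‖z‖^2 := real_inner_self_eq_norm_sq z
    linear_combination (‖z‖^2 * h2 - h1)/2 - ⟪x,y⟫ * h3
  have F3 : ∀ a b c d : EuclideanSpace ℝ (Fin n),
      ⟪mul a b, mul c d⟫ + ⟪mul c b, mul a d⟫ = 2 * ⟪a,c⟫ * ⟪b,d⟫ := by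
    intro a b c d
    have h := F1 (a + c) b d
    rw [h_add_left, h_add_left] at h
    simp only [inner_add_left, inner_add_right] at h
    linear_combination h - F1 a b d - F1 c b d + ⟪b,d⟫ * real_inner_comm a c
  have F4 : ∀ a b c d : EuclideanSpace ℝ (Fin n),
      ⟪mul a b, mul c d⟫ + ⟪mul a d, mul c b⟫ = 2 * ⟪a,c⟫ * ⟪b,d⟫ := by
    intro a b c d
    have h := F2 a c (b + d)
    rw [h_add_right, h_add_right] at h
    simp only [inner_add_left, inner_add_right] at h
    linear_combination h - F2 a c b - F2 a c d + ⟪a,c⟫ * real_inner_comm b d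
  have F5 : ∀ a b c : EuclideanSpace ℝ (Fin n),
      ⟪mul a b, c⟫ + ⟪b, mul a c⟫ = 2 * ⟪a,e⟫ * ⟪b,c⟫ := by
    intro a b c
    have h := F3 a b e c
    rw [h_one_left, h_one_left] at h
    exact h
  have F6 : ∀ a b c : EuclideanSpace ℝ (Fin n),
      ⟪mul a b, c⟫ + ⟪a, mul c b⟫ = 2 * ⟪b,e⟫ * ⟪a,c⟫ := by
    intro a b c
    have h := F4 a b c e
    rw [h_one_right, h_one_right] at h
    linear_combination h
  have E1 : ∀ c d : EuclideanSpace ℝ (Fin n),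
      ⟪e, mul c d⟫ = 2 * ⟪c,e⟫ * ⟪e,d⟫ - ⟪c,d⟫ := by
    intro c d
    have h := F5 c e d
    rw [h_one_right] at h
    linear_combination h
  have E2 : ∀ a b : EuclideanSpace ℝ (Fin n),
      ⟪mul a b, e⟫ = 2 * ⟪a,e⟫ * ⟪b,e⟫ - ⟪b,a⟫ := by
    intro a b
    have h := F5 a b e
    rw [h_one_right] at h
    linear_combination h
  have Q : ∀ x w : EuclideanSpace ℝ (Fin n),
      ⟪mul x x, w⟫ = 2 * ⟪x,e⟫ * ⟪x,w⟫ - ⟪x,x⟫ * ⟪e,w⟫ := by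
    intro x w
    have h := F5 x x w
    have h2 := F1 x e w
    rw [h_one_right] at h2
    linear_combination h - h2
  have Qsum : ∀ a b w : EuclideanSpace ℝ (Fin n),
      ⟪mul a b, w⟫ + ⟪mul b a, w⟫
        = 2 * ⟪a,e⟫ * ⟪b,w⟫ + 2 * ⟪b,e⟫ * ⟪a,w⟫ - 2 * ⟪a,b⟫ * ⟪e,w⟫ := by
    intro a b w
    have h := Q (a + b) w
    rw [h_add_left, h_add_right, h_add_right] at h
    simp only [inner_add_left, inner_add_right] at h
    linear_combination h - Q a w - Q b w - ⟪e,w⟫ * real_inner_comm a b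
  have QsumR : ∀ c d w : EuclideanSpace ℝ (Fin n),
      ⟪w, mul c d⟫ + ⟪w, mul d c⟫
        = 2 * ⟪c,e⟫ * ⟪w,d⟫ + 2 * ⟪d,e⟫ * ⟪w,c⟫ - 2 * ⟪c,d⟫ * ⟪w,e⟫ := by
    intro c d w
    linear_combination Qsum c d w + (1) * real_inner_comm (mul c d) w
      + (1) * real_inner_comm (mul d c) w + (-2 * ⟪c, e⟫) * real_inner_comm d w
      + (-2 * ⟪d, e⟫) * real_inner_comm c w + (2 * ⟪c, d⟫) * real_inner_comm e w
  have R1 : ∀ x a d : EuclideanSpace ℝ (Fin n),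
      ⟪x, mul a d⟫ + ⟪mul x d, a⟫ = 2 * ⟪x,a⟫ * ⟪e,d⟫ := by
    intro x a d
    have h := F4 x e a d
    rw [h_one_right, h_one_right] at h
    exact h
  refine ⟨fun A B C D => ⟨?_, ?_, ?_⟩, fun A B C => ⟨?_, ?_⟩⟩
  · -- swap A and B
    simp only [inner_sub_right]
    linear_combination F6 (mul B C) D A + F6 (mul A C) D B + (-1) * (F5 B A (mul C D))
      + (-1) * (F5 A B (mul C D)) + (-1) * (F3 B C A D) + Qsum A B (mul C D)
      + (2 * (⟪D, e⟫)) * (F5 B C A) + (2 * (⟪D, e⟫)) * (F5 A C B)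
      + (-2 * (⟪D, e⟫)) * (Qsum A B C) + (-2 * (⟪A, B⟫)) * (E1 C D)
      + (1) * real_inner_comm (mul (mul B C) D) A + (1) * real_inner_comm (mul (mul A C) D) B
      + (-2 * ⟪C, D⟫) * real_inner_comm A B + (-2 * ⟪D, e⟫) * real_inner_comm (mul B A) C
      + (4 * ⟪B, e⟫ * ⟪D, e⟫) * real_inner_comm A C
      + (-2 * ⟪D, e⟫) * real_inner_comm (mul A B) C
      + (4 * ⟪A, e⟫ * ⟪D, e⟫) * real_inner_comm B C
      + (4 * ⟪A, B⟫ * ⟪D, e⟫) * real_inner_comm C e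
      + (-4 * ⟪A, B⟫ * ⟪C, e⟫) * real_inner_comm D e
  · -- swap B and C
    simp only [inner_sub_right]
    linear_combination F6 (mul B C) D A + F6 (mul C B) D A + (-1) * (Qsum B C (mul A D))
      + (2 * (⟪D, e⟫)) * (Qsum B C A) + (-1) * (F5 B A (mul C D)) + (-1) * (F5 C A (mul B D))
      + F3 B A C D + (-2 * (⟪B, e⟫)) * (R1 C A D) + (-2 * (⟪C, e⟫)) * (R1 B A D)
      + (2 * (⟪B, C⟫)) * (E1 A D) + (1) * real_inner_comm (mul (mul B C) D) A
      + (1) * real_inner_comm (mul (mul C B) D) A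
      + (4 * ⟪B, e⟫ * ⟪D, e⟫) * real_inner_comm A C
      + (4 * ⟪C, e⟫ * ⟪D, e⟫) * real_inner_comm A B
      + (-4 * ⟪B, C⟫ * ⟪D, e⟫) * real_inner_comm A e
      + (-2 * ⟪B, e⟫) * real_inner_comm (mul C D) A
      + (-2 * ⟪C, e⟫) * real_inner_comm (mul B D) A
      + (-4 * ⟪B, e⟫ * ⟪e, D⟫) * real_inner_comm A C
      + (-4 * ⟪B, e⟫ * ⟪A, C⟫) * real_inner_comm D e
      + (-4 * ⟪C, e⟫ * ⟪e, D⟫) * real_inner_comm A B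
      + (-4 * ⟪A, B⟫ * ⟪C, e⟫) * real_inner_comm D e
      + (4 * ⟪A, e⟫ * ⟪B, C⟫) * real_inner_comm D e
  · -- swap C and D
    simp only [inner_sub_right]
    linear_combination F6 (mul B C) D A + F6 (mul B D) C A + (-1) * (F4 B C A D)
      + (-1) * (F5 B A (mul C D)) + (-1) * (F5 B A (mul D C))
      + (-2 * (⟪B, e⟫)) * (QsumR C D A) + QsumR C D (mul B A)
      + (2 * (⟪C, e⟫)) * (F5 B A D) + (2 * (⟪D, e⟫)) * (F5 B A C)
      + (-2 * (⟪C, D⟫)) * (E2 B A)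
      + (1) * real_inner_comm (mul (mul B C) D) A
      + (1) * real_inner_comm (mul (mul B D) C) A
      + (-2 * ⟪C, D⟫) * real_inner_comm A B
      + (-2 * ⟪C, e⟫) * real_inner_comm (mul B D) A
      + (-2 * ⟪D, e⟫) * real_inner_comm (mul B C) A
  · -- commutator: swap A and B
    simp only [inner_sub_right]
    linear_combination F5 B A C + (-1) * (F6 C B A) + F5 A B C + (-1) * (F6 C A B)
      + (-1) * real_inner_comm (mul C B) A + (-1) * real_inner_comm (mul C A) B
      + (1) * real_inner_comm (mul A B) C + (-2 * ⟪B, e⟫) * real_inner_comm A C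
      + (1) * real_inner_comm (mul B A) C + (-2 * ⟪A, e⟫) * real_inner_comm B C
  · -- commutator: swap B and C
    simp only [inner_sub_right]
    ring
end

section
/- In a normed division algebra, the cross product A × B = Im(AB) on Im(D) satisfies ‖A × B‖² = ‖A‖²‖B‖² − ⟨A,B⟩² for all A, B ∈ Im(D). -/
open scoped RealInnerProductSpace

/-- In a normed division algebra, for imaginary A, B:
`‖A × B‖ ^ 2 = ‖A‖ ^ 2 * ‖B‖ ^ 2 - ⟪A,B⟫ ^ 2`, where `A × B = Im (A*B)`. -/
theorem nda_cross_norm_sq {n : ℕ}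
    (mul : EuclideanSpace ℝ (Fin n) → EuclideanSpace ℝ (Fin n) → EuclideanSpace ℝ (Fin n))
    (e : EuclideanSpace ℝ (Fin n))
    (h_add_left : ∀ a b c, mul (a + b) c = mul a c + mul b c)
    (h_add_right : ∀ a b c, mul a (b + c) = mul a b + mul a c)
    (h_smul_left : ∀ (r : ℝ) a b, mul (r • a) b = r • mul a b)
    (h_smul_right : ∀ (r : ℝ) a b, mul a (r • b) = r • mul a b)
    (h_one_left : ∀ a, mul e a = a)
    (h_one_right : ∀ a, mul a e = a)
    (h_norm : ∀ a b, ‖mul a b‖ = ‖a‖ * ‖b‖)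
    : ∀ A B : EuclideanSpace ℝ (Fin n),
      ndaRe e A = 0 → ndaRe e B = 0 →
      ‖ndaIm e (mul A B)‖ ^ 2 = ‖A‖ ^ 2 * ‖B‖ ^ 2 - ⟪A, B⟫ ^ 2 := by
  intro A B hA hB
  -- squared norm multiplicativity
  have hnsq : ∀ a b, ‖mul a b‖ ^ 2 = ‖a‖ ^ 2 * ‖b‖ ^ 2 := by
    intro a b; rw [h_norm]; ring
  -- polarization in second argument
  have hpol : ∀ a b d, ⟪mul a b, mul a d⟫ = ‖a‖ ^ 2 * ⟪b, d⟫ := by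
    intro a b d
    have h1 := hnsq a (b + d)
    rw [h_add_right] at h1
    rw [@norm_add_sq_real] at h1
    have hbd : ‖b + d‖ ^ 2 = ‖b‖ ^ 2 + 2 * ⟪b, d⟫ + ‖d‖ ^ 2 := norm_add_sq_real b d
    have h2 := hnsq a b
    have h3 := hnsq a d
    nlinarith [h1, h2, h3, hbd]
  -- exchange identity
  have hexch : ∀ a b c d, ⟪mul a b, mul c d⟫ + ⟪mul c b, mul a d⟫
      = 2 * ⟪a, c⟫ * ⟪b, d⟫ := by
    intro a b c d
    have h1 := hpol (a + c) b d
    rw [h_add_left, h_add_left, inner_add_left, inner_add_right, inner_add_right,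
      @norm_add_sq_real] at h1
    have h2 := hpol a b d
    have h3 := hpol c b d
    nlinarith [h1, h2, h3]
  by_cases he : e = 0
  · have hA0 : A = 0 := by
      have := h_one_left A
      rw [he] at this
      have h0 : mul 0 A = 0 := by
        have := h_smul_left 0 A A
        simpa using this
      rw [h0] at this; exact this.symm
    have h0B : mul (0 : EuclideanSpace ℝ (Fin n)) B = 0 := by
      have := h_smul_left 0 B B
      simpa using this
    subst hA0
    simp [ndaIm, ndaRe, h0B]
  · have hne : ‖e‖ ≠ 0 := norm_ne_zero_iff.mpr he
    have hnorme : ‖e‖ = 1 := by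
      have := h_norm e e
      rw [h_one_left] at this
      field_simp at this
      nlinarith [this, norm_nonneg e]
    have hee : ⟪e, e⟫ = 1 := by
      rw [real_inner_self_eq_norm_sq, hnorme]; ring
    have hAe : ⟪e, A⟫ = 0 := by
      have : (⟪e, A⟫ / ⟪e, e⟫) • e = 0 := hA
      rw [hee] at this
      rcases smul_eq_zero.mp this with h | h
      · field_simp at h; exact h
      · exact absurd h he
    have hBe : ⟪e, B⟫ = 0 := by
      have : (⟪e, B⟫ / ⟪e, e⟫) • e = 0 := hB
      rw [hee] at this
      rcases smul_eq_zero.mp this with h | h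
      · field_simp at h; exact h
      · exact absurd h he
    -- key: ⟪e, AB⟫ = -⟪A,B⟫
    have hkey : ⟪e, mul A B⟫ = -⟪A, B⟫ := by
      have := hexch A B e e
      simp only [h_one_left, h_one_right] at this
      have hsymm : ⟪mul A B, e⟫ = ⟪e, mul A B⟫ := real_inner_comm _ _
      have hsymm2 : ⟪B, A⟫ = ⟪A, B⟫ := real_inner_comm _ _
      have hsymm3 : ⟪A, e⟫ = ⟪e, A⟫ := real_inner_comm _ _
      have hsymm4 : ⟪B, e⟫ = ⟪e, B⟫ := real_inner_comm _ _
      rw [hAe] at hsymm3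
      rw [hBe] at hsymm4
      rw [hsymm, hsymm2, hsymm3, hsymm4] at this
      linarith
    set P := mul A B with hP
    have hRe : ndaRe e P = (-⟪A, B⟫) • e := by
      rw [ndaRe, hee, hkey]; norm_num
    have hPsq : ‖P‖ ^ 2 = ‖A‖ ^ 2 * ‖B‖ ^ 2 := hnsq A B
    have hPe : ⟪P, e⟫ = -⟪A, B⟫ := by rw [real_inner_comm]; exact hkey
    rw [ndaIm, hRe, @norm_sub_sq_real, inner_smul_right, hPe, norm_smul, hnorme, hPsq,
      norm_neg, Real.norm_eq_abs, mul_one, sq_abs]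
    ring
end

section
/- In a normed division algebra, for purely imaginary A, B one has AB = −⟨A,B⟩·1 + A × B, where A × B = Im(AB). -/
open scoped RealInnerProductSpace

/-- In a normed division algebra, for purely imaginary A, B:
`A*B = -⟪A,B⟫ • 1 + A × B`, where `A × B = Im (A*B)`. -/
theorem nda_mul_eq_neg_inner_add_cross {n : ℕ}
    (mul : EuclideanSpace ℝ (Fin n) → EuclideanSpace ℝ (Fin n) → EuclideanSpace ℝ (Fin n))
    (e : EuclideanSpace ℝ (Fin n))
    (h_add_left : ∀ a b c, mul (a + b) c = mul a c + mul b c)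
    (h_add_right : ∀ a b c, mul a (b + c) = mul a b + mul a c)
    (h_smul_left : ∀ (r : ℝ) a b, mul (r • a) b = r • mul a b)
    (h_smul_right : ∀ (r : ℝ) a b, mul a (r • b) = r • mul a b)
    (h_one_left : ∀ a, mul e a = a)
    (h_one_right : ∀ a, mul a e = a)
    (h_norm : ∀ a b, ‖mul a b‖ = ‖a‖ * ‖b‖)
    : ∀ A B : EuclideanSpace ℝ (Fin n),
      ndaRe e A = 0 → ndaRe e B = 0 →
      mul A B = (-⟪A, B⟫) • e + ndaIm e (mul A B) := by
  intro A B hA hB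
  by_cases he : e = 0
  · -- degenerate: everything is zero
    have hAz : A = 0 := by
      have := h_one_left A
      rw [he, show (0 : EuclideanSpace ℝ (Fin n)) = (0:ℝ) • (0 : EuclideanSpace ℝ (Fin n)) by simp,
        h_smul_left] at this
      simpa using this.symm
    subst he hAz
    have hm : mul 0 B = 0 := by
      have := h_smul_left 0 0 B
      simpa using this
    simp [hm, ndaIm, ndaRe]
  · have hene : ‖e‖ = 1 := by
      have h := h_norm e e
      rw [h_one_left] at h
      have hn : ‖e‖ ≠ 0 := by simpa using he
      have : ‖e‖ * ‖e‖ = ‖e‖ * 1 := by rw [mul_one, ← h]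
      exact mul_left_cancel₀ hn this
    have hee : ⟪e, e⟫ = 1 := by
      rw [real_inner_self_eq_norm_sq, hene]; norm_num
    -- imaginary conditions
    have hAe : ⟪e, A⟫ = 0 := by
      have : (⟪e, A⟫ / ⟪e, e⟫) • e = 0 := hA
      rcases smul_eq_zero.mp this with h | h
      · rw [hee] at h; field_simp at h; exact h
      · exact absurd h he
    have hBe : ⟪e, B⟫ = 0 := by
      have : (⟪e, B⟫ / ⟪e, e⟫) • e = 0 := hB
      rcases smul_eq_zero.mp this with h | h
      · rw [hee] at h; field_simp at h; exact h
      · exact absurd h he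
    -- lemma 1: ⟪mul a b, mul a c⟫ = ‖a‖² ⟪b, c⟫
    have lem1 : ∀ a b c : EuclideanSpace ℝ (Fin n),
        ⟪mul a b, mul a c⟫ = ‖a‖^2 * ⟪b, c⟫ := by
      intro a b c
      have h1 := h_norm a (b + c)
      rw [h_add_right] at h1
      have h2 : ‖mul a b + mul a c‖^2 = ‖a‖^2 * ‖b + c‖^2 := by rw [h1]; ring
      rw [norm_add_sq_real, norm_add_sq_real] at h2
      have hab := h_norm a b
      have hac := h_norm a c
      rw [hab, hac] at h2
      linear_combination h2 / 2
    -- exchange identity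
    have lem2 : ∀ a b c d : EuclideanSpace ℝ (Fin n),
        ⟪mul a b, mul c d⟫ + ⟪mul c b, mul a d⟫ = 2 * ⟪a, c⟫ * ⟪b, d⟫ := by
      intro a b c d
      have h1 := lem1 (a + c) b d
      rw [h_add_left, h_add_left] at h1
      rw [inner_add_left, inner_add_right, inner_add_right] at h1
      rw [norm_add_sq_real] at h1
      have h2 := lem1 a b d
      have h3 := lem1 c b d
      nlinarith [h1]
    -- key: ⟪e, mul A B⟫ = -⟪A, B⟫
    have hkey : ⟪e, mul A B⟫ = -⟪A, B⟫ := by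
      have h := lem2 A B e e
      rw [h_one_left, h_one_left, h_one_right] at h
      have hsym : ⟪mul A B, e⟫ = ⟪e, mul A B⟫ := real_inner_comm _ _
      have hBA : ⟪B, A⟫ = ⟪A, B⟫ := real_inner_comm _ _
      have hAe' : ⟪A, e⟫ = 0 := by rw [real_inner_comm]; exact hAe
      linear_combination h - hsym - hBA + (2 * ⟪B, e⟫) * hAe'
    -- conclude
    have : ndaRe e (mul A B) = (-⟪A, B⟫) • e := by
      rw [ndaRe, hee, hkey]
      norm_num
    rw [ndaIm, this]
    abel
end

section
/- In a normed division algebra, for purely imaginary A, C one has A × (A × C) = −‖A‖²C + ⟨A,C⟩A; consequently if {A,B,C} is orthonormal in Im(D) and A × B = C, then B × C = A and C × A = B. -/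
open scoped RealInnerProductSpace

/-- In a normed division algebra, for imaginary A, C:
`A × (A × C) = -‖A‖ ^ 2 • C + ⟪A,C⟫ • A`; consequently if {A,B,C} is orthonormal in
Im(D) and `A × B = C`, then `B × C = A` and `C × A = B`. -/
theorem nda_cross_cross {n : ℕ}
    (mul : EuclideanSpace ℝ (Fin n) → EuclideanSpace ℝ (Fin n) → EuclideanSpace ℝ (Fin n))
    (e : EuclideanSpace ℝ (Fin n))
    (h_add_left : ∀ a b c, mul (a + b) c = mul a c + mul b c)
    (h_add_right : ∀ a b c, mul a (b + c) = mul a b + mul a c)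
    (h_smul_left : ∀ (r : ℝ) a b, mul (r • a) b = r • mul a b)
    (h_smul_right : ∀ (r : ℝ) a b, mul a (r • b) = r • mul a b)
    (h_one_left : ∀ a, mul e a = a)
    (h_one_right : ∀ a, mul a e = a)
    (h_norm : ∀ a b, ‖mul a b‖ = ‖a‖ * ‖b‖)
    : (∀ A C : EuclideanSpace ℝ (Fin n),
        ndaRe e A = 0 → ndaRe e C = 0 →
        ndaIm e (mul A (ndaIm e (mul A C))) = (-(‖A‖ ^ 2)) • C + ⟪A, C⟫ • A) ∧
      (∀ A B C : EuclideanSpace ℝ (Fin n),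
        ndaRe e A = 0 → ndaRe e B = 0 → ndaRe e C = 0 →
        ‖A‖ = 1 → ‖B‖ = 1 → ‖C‖ = 1 →
        ⟪A, B⟫ = 0 → ⟪A, C⟫ = 0 → ⟪B, C⟫ = 0 →
        ndaIm e (mul A B) = C →
        ndaIm e (mul B C) = A ∧ ndaIm e (mul C A) = B) := by
  classical
  by_cases he : e = 0
  · have hz : ∀ x : EuclideanSpace ℝ (Fin n), x = 0 := by
      intro x
      have h1 := h_one_left x
      have h0 : mul e x = 0 := by
        rw [he, show (0 : EuclideanSpace ℝ (Fin n)) = (0:ℝ) • (0 : EuclideanSpace ℝ (Fin n)) by simp,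
          h_smul_left]
        simp
      rw [h0] at h1
      exact h1.symm
    have heq : ∀ x y : EuclideanSpace ℝ (Fin n), x = y := fun x y => (hz x).trans (hz y).symm
    exact ⟨fun A C _ _ => heq _ _, fun A B C _ _ _ _ _ _ _ _ _ _ => ⟨heq _ _, heq _ _⟩⟩
  · have hne : ‖e‖ = 1 := by
      have h := h_norm e e
      rw [h_one_left e] at h
      have h1 : ‖e‖ * 1 = ‖e‖ * ‖e‖ := by rw [mul_one]; exact h
      exact (mul_left_cancel₀ (norm_ne_zero_iff.mpr he) h1).symm
    have hee : ⟪e, e⟫ = (1:ℝ) := by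
      rw [real_inner_self_eq_norm_sq, hne]; norm_num
    -- polarization in the second argument
    have hL1 : ∀ a b c, ⟪mul a b, mul a c⟫ = ‖a‖^2 * ⟪b, c⟫ := by
      intro a b c
      have e1 : ‖mul a b + mul a c‖^2 = ‖a‖^2 * ‖b + c‖^2 := by
        rw [← h_add_right, h_norm, mul_pow]
      rw [norm_add_sq_real, norm_add_sq_real, h_norm, h_norm] at e1
      nlinarith [e1]
    -- exchange identity
    have hL3 : ∀ a b c d, ⟪mul a b, mul c d⟫ + ⟪mul c b, mul a d⟫ = 2 * ⟪a, c⟫ * ⟪b, d⟫ := by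
      intro a b c d
      have e1 := hL1 (a + c) b d
      rw [h_add_left, h_add_left, inner_add_left, inner_add_right, inner_add_right,
        norm_add_sq_real] at e1
      have e2 := hL1 a b d
      have e3 := hL1 c b d
      nlinarith [e1, e2, e3]
    -- adjoint identity
    have hK0 : ∀ a x y, ⟪mul a x, y⟫ + ⟪x, mul a y⟫ = 2 * ⟪a, e⟫ * ⟪x, y⟫ := by
      intro a x y
      have h1 := hL3 a x e y
      rwa [h_one_left, h_one_left] at h1
    -- key: a(ab) = -‖a‖² b for imaginary a
    have hK1 : ∀ a, ⟪e, a⟫ = 0 → ∀ b, mul a (mul a b) = (-(‖a‖^2)) • b := by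
      intro a ha b
      apply ext_inner_right ℝ
      intro c
      have h1 := hK0 a (mul a b) c
      have h2 := hL1 a b c
      have ha' : ⟪a, e⟫ = 0 := by rwa [real_inner_comm]
      rw [ha'] at h1
      rw [real_inner_smul_left]
      linarith
    -- linearized version
    have hK2 : ∀ a c, ⟪e, a⟫ = 0 → ⟪e, c⟫ = 0 → ∀ b,
        mul a (mul c b) + mul c (mul a b) = (-(2 * ⟪a, c⟫)) • b := by
      intro a c ha hc b
      have hac : ⟪e, a + c⟫ = 0 := by rw [inner_add_right, ha, hc]; ring
      have key : mul a (mul c b) + mul c (mul a b)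
          = mul (a + c) (mul (a + c) b) - mul a (mul a b) - mul c (mul c b) := by
        rw [h_add_left a c b, h_add_right, h_add_left, h_add_left]
        abel
      rw [hK1 (a + c) hac b, hK1 a ha b, hK1 c hc b, norm_add_sq_real] at key
      rw [key]
      match_scalars
      ring
    -- real part of product of imaginaries
    have hK3 : ∀ a b, ⟪e, a⟫ = 0 → ⟪e, mul a b⟫ = -⟪a, b⟫ := by
      intro a b ha
      have h1 := hK0 a b e
      have ha' : ⟪a, e⟫ = 0 := by rwa [real_inner_comm]
      rw [ha', h_one_right a] at h1
      rw [real_inner_comm]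
      have hba : ⟪b, a⟫ = ⟪a, b⟫ := real_inner_comm a b
      linarith
    -- Re / Im translation
    have hRe0 : ∀ A : EuclideanSpace ℝ (Fin n), ndaRe e A = 0 → ⟪e, A⟫ = 0 := by
      intro A hA
      unfold ndaRe at hA
      rcases smul_eq_zero.mp hA with h | h
      · rw [hee, div_one] at h; exact h
      · exact absurd h he
    have hIm : ∀ X : EuclideanSpace ℝ (Fin n), ndaIm e X = X - ⟪e, X⟫ • e := by
      intro X
      unfold ndaIm ndaRe
      rw [hee, div_one]
    have hIm0 : ∀ X : EuclideanSpace ℝ (Fin n), ⟪e, X⟫ = 0 → ndaIm e X = X := by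
      intro X hX
      rw [hIm, hX, zero_smul, sub_zero]
    -- Part 1
    have part1 : ∀ A C : EuclideanSpace ℝ (Fin n),
        ndaRe e A = 0 → ndaRe e C = 0 →
        ndaIm e (mul A (ndaIm e (mul A C))) = (-(‖A‖ ^ 2)) • C + ⟪A, C⟫ • A := by
      intro A C hA0 hC0
      have hA := hRe0 A hA0
      have hC := hRe0 C hC0
      have h1 : ndaIm e (mul A C) = mul A C + ⟪A, C⟫ • e := by
        rw [hIm, hK3 A C hA]
        module
      have h2 : mul A (ndaIm e (mul A C)) = (-(‖A‖ ^ 2)) • C + ⟪A, C⟫ • A := by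
        rw [h1, h_add_right, h_smul_right, h_one_right, hK1 A hA C]
      rw [h2]
      apply hIm0
      rw [inner_add_right, inner_smul_right, inner_smul_right, hA, hC]
      ring
    refine ⟨part1, ?_⟩
    intro A B C hA0 hB0 hC0 hnA hnB hnC hAB hAC hBC hABC
    have hA := hRe0 A hA0
    have hB := hRe0 B hB0
    have hC := hRe0 C hC0
    have hABeC : mul A B = C := by
      rw [hIm0 (mul A B) (by rw [hK3 A B hA, hAB]; ring)] at hABC
      exact hABC
    -- mul B C = A
    have hBCA : mul B C = A := by
      have h2 := hK2 B A hB hA B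
      have hBA : ⟪B, A⟫ = 0 := by rw [real_inner_comm]; exact hAB
      rw [hBA] at h2
      have hBB : mul B B = (-(‖B‖^2)) • e := by
        have := hK1 B hB e; rwa [h_one_right] at this
      rw [hBB, hnB, h_smul_right, h_one_right, hABeC] at h2
      have h4 : mul B C + (-(1:ℝ)^2) • A = 0 := by rw [h2]; norm_num
      calc mul B C = (mul B C + (-(1:ℝ)^2) • A) + A := by module
        _ = 0 + A := by rw [h4]
        _ = A := zero_add A
    -- mul A C = -B
    have hACB : mul A C = -B := by
      have h6 := hK1 A hA B
      rw [hABeC, hnA] at h6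
      rw [h6]; module
    -- mul C A = B
    have hCAB : mul C A = B := by
      have h7 := hK2 C A hC hA e
      have hCA : ⟪C, A⟫ = 0 := by rw [real_inner_comm]; exact hAC
      rw [h_one_right, h_one_right, hCA, hACB] at h7
      have h8 : mul C A + -B = 0 := by rw [h7]; norm_num
      calc mul C A = (mul C A + -B) + B := by module
        _ = 0 + B := by rw [h8]
        _ = B := zero_add B
    exact ⟨by rw [hBCA]; exact hIm0 A hA, by rw [hCAB]; exact hIm0 B hB⟩
end

section
/- Let I = R^(n−1) with Euclidean inner product admit a vector cross product ×, i.e., an antisymmetric bilinear map with ⟨α×β, α⟩ = ⟨α×β, β⟩ = 0 and ‖α×β‖² = ‖α‖²‖β‖² − ⟨α,β⟩². Then D = R ⊕ I with product (a,α)(b,β) = (ab − ⟨α,β⟩, aβ + bα + α×β) is a normed division algebra: it is bilinear, unital with unit (1,0), and satisfies ‖XY‖ = ‖X‖‖Y‖ for the Euclidean norm on R ⊕ I. -/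
open scoped RealInnerProductSpace

/-- If `I = ℝ^(n-1)` with the Euclidean inner product admits a vector cross product
(an antisymmetric bilinear map with `⟪α×β, α⟫ = ⟪α×β, β⟫ = 0` and
`‖α×β‖² = ‖α‖²‖β‖² − ⟪α,β⟫²`), then `D = ℝ ⊕ I` with the product
`(a,α)(b,β) = (ab − ⟪α,β⟫, aβ + bα + α×β)` is a normed division algebra: the product
is bilinear, unital with unit `(1,0)`, and the Euclidean norm
`‖(a,α)‖ = √(a² + ‖α‖²)` is multiplicative. -/
theorem cross_product_gives_normed_division_algebra (m : ℕ)
    (cross : EuclideanSpace ℝ (Fin m) → EuclideanSpace ℝ (Fin m) → EuclideanSpace ℝ (Fin m))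
    (h_anti : ∀ α β, cross α β = -cross β α)
    (h_add_left : ∀ α β γ, cross (α + β) γ = cross α γ + cross β γ)
    (h_add_right : ∀ α β γ, cross α (β + γ) = cross α β + cross α γ)
    (h_smul_left : ∀ (r : ℝ) α β, cross (r • α) β = r • cross α β)
    (h_smul_right : ∀ (r : ℝ) α β, cross α (r • β) = r • cross α β)
    (h_orth₁ : ∀ α β, ⟪cross α β, α⟫ = 0)
    (h_orth₂ : ∀ α β, ⟪cross α β, β⟫ = 0)
    (h_cross_norm : ∀ α β, ‖cross α β‖ ^ 2 = ‖α‖ ^ 2 * ‖β‖ ^ 2 - ⟪α, β⟫ ^ 2) :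
    ∀ mul : ℝ × EuclideanSpace ℝ (Fin m) → ℝ × EuclideanSpace ℝ (Fin m) →
      ℝ × EuclideanSpace ℝ (Fin m),
      (mul = fun p q =>
        (p.1 * q.1 - ⟪p.2, q.2⟫, p.1 • q.2 + q.1 • p.2 + cross p.2 q.2)) →
      (∀ p q r, mul (p + q) r = mul p r + mul q r) ∧
      (∀ p q r, mul p (q + r) = mul p q + mul p r) ∧
      (∀ (c : ℝ) p q, mul (c • p) q = c • mul p q) ∧
      (∀ (c : ℝ) p q, mul p (c • q) = c • mul p q) ∧
      (∀ p, mul (1, 0) p = p ∧ mul p (1, 0) = p) ∧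
      (∀ p q, Real.sqrt ((mul p q).1 ^ 2 + ‖(mul p q).2‖ ^ 2)
        = Real.sqrt (p.1 ^ 2 + ‖p.2‖ ^ 2) * Real.sqrt (q.1 ^ 2 + ‖q.2‖ ^ 2)) := by

  intro mul hmul
  subst hmul
  refine ⟨?_, ?_, ?_, ?_, ?_, ?_⟩
  · intro p q r
    simp only [Prod.fst_add, Prod.snd_add, h_add_left, Prod.mk_add_mk, Prod.mk.injEq]
    constructor
    · simp [inner_add_left]; ring
    · module
  · intro p q r
    simp only [Prod.fst_add, Prod.snd_add, h_add_right, Prod.mk_add_mk, Prod.mk.injEq]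
    constructor
    · simp [inner_add_right]; ring
    · module
  · intro c p q
    simp only [Prod.smul_fst, Prod.smul_snd, h_smul_left, Prod.smul_mk, Prod.mk.injEq,
      smul_eq_mul]
    constructor
    · simp [inner_smul_left]; ring
    · module
  · intro c p q
    simp only [Prod.smul_fst, Prod.smul_snd, h_smul_right, Prod.smul_mk, Prod.mk.injEq,
      smul_eq_mul]
    constructor
    · simp [inner_smul_right]; ring
    · module
  · intro p
    have h0 : ∀ α, cross (0 : EuclideanSpace ℝ (Fin m)) α = 0 := by
      intro α
      have := h_smul_left 0 α α
      simpa using this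
    have h0' : ∀ α, cross α (0 : EuclideanSpace ℝ (Fin m)) = 0 := by
      intro α
      have := h_smul_right 0 α α
      simpa using this
    constructor <;> simp [h0, h0']
  · intro p q
    obtain ⟨a, α⟩ := p
    obtain ⟨b, β⟩ := q
    rw [← Real.sqrt_mul (by positivity)]
    congr 1
    simp only
    have hkey : ‖a • β + b • α + cross α β‖ ^ 2
        = a ^ 2 * ‖β‖ ^ 2 + b ^ 2 * ‖α‖ ^ 2 + 2 * (a * b) * ⟪α, β⟫
          + (‖α‖ ^ 2 * ‖β‖ ^ 2 - ⟪α, β⟫ ^ 2) := by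
      rw [← h_cross_norm α β]
      have expand : ∀ x y : EuclideanSpace ℝ (Fin m),
          ‖x + y‖ ^ 2 = ‖x‖ ^ 2 + 2 * ⟪x, y⟫ + ‖y‖ ^ 2 := by
        intro x y
        rw [← real_inner_self_eq_norm_sq, ← real_inner_self_eq_norm_sq,
          ← real_inner_self_eq_norm_sq, inner_add_add_self, real_inner_comm y x]
        ring
      rw [expand, expand]
      have h1 : ⟪a • β, b • α⟫ = a * b * ⟪β, α⟫ := by
        rw [real_inner_smul_left, real_inner_smul_right]; ring
      have h2 : ⟪a • β + b • α, cross α β⟫ = 0 := by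
        have o1 : ⟪β, cross α β⟫ = 0 := by rw [real_inner_comm]; exact h_orth₂ α β
        have o2 : ⟪α, cross α β⟫ = 0 := by rw [real_inner_comm]; exact h_orth₁ α β
        rw [inner_add_left, real_inner_smul_left, real_inner_smul_left, o1, o2]
        ring
      rw [h1, h2, norm_smul, norm_smul, real_inner_comm β α]
      simp [mul_pow]
      ring
    rw [hkey]
    ring
end
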